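/- Let f : (0,∞) → ℝ be operator monotone decreasing with f(1) = 0, and let a_f ∈ ℝ be such that −f(x)/x → a_f as x → ∞. Let ρ and σ be positive definite d×d density matrices, let λ_ρ be the largest eigenvalue of ρ and α_σ the smallest eigenvalue of σ, and assume α_σ < λ_ρ. Then the quasi-relative entropy satisfies S_f(ρ‖σ) ≤ ‖ρ−σ‖₁ · √d · [ (λ_ρ/(λ_ρ−α_σ)) · f(α_σ/λ_ρ) − a_f ]. -/

import Mathlib

open Matrix ComplexOrder

/-- The trace norm of a complex matrix: the sum of its singular values,
realized as `Tr √(Aᴴ A)`. -/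
noncomputable def traceNorm {d : ℕ} (A : Matrix (Fin d) (Fin d) ℂ) : ℝ :=
  ((((Matrix.posSemidef_conjTranspose_mul_self A).1.eigenvectorUnitary : Matrix (Fin d) (Fin d) ℂ) *
      Matrix.diagonal (((↑) : ℝ → ℂ) ∘ Real.sqrt ∘ (Matrix.posSemidef_conjTranspose_mul_self A).1.eigenvalues) *
      (star (Matrix.posSemidef_conjTranspose_mul_self A).1.eigenvectorUnitary :
        Matrix (Fin d) (Fin d) ℂ)).trace).re

/-- Functional calculus for a Hermitian matrix: apply `f` to the eigenvalues in an
orthonormal eigenbasis. -/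
noncomputable def matFun {d : ℕ} {A : Matrix (Fin d) (Fin d) ℂ} (hA : A.IsHermitian)
    (f : ℝ → ℝ) : Matrix (Fin d) (Fin d) ℂ :=
  (hA.eigenvectorUnitary : Matrix (Fin d) (Fin d) ℂ) *
    Matrix.diagonal (fun i => (f (hA.eigenvalues i) : ℂ)) *
    (star hA.eigenvectorUnitary : Matrix (Fin d) (Fin d) ℂ)

/-- `f : (0,∞) → ℝ` is operator monotone decreasing: for all positive definite matrices
`A ≤ B` (Loewner order) of any size, `f(B) ≤ f(A)`. -/
def OpMonoDecrOn (f : ℝ → ℝ) : Prop :=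
  ∀ (n : ℕ) (A B : Matrix (Fin n) (Fin n) ℂ) (hA : A.PosDef) (hB : B.PosDef),
    (B - A).PosSemidef → (matFun hA.1 f - matFun hB.1 f).PosSemidef

/-- The quasi-relative entropy `S_f(ρ‖σ) = Σ_{j,k} λ_j f(μ_k/λ_j) |⟨φ_k|ψ_j⟩|²` computed from
spectral decompositions `ρ = Σ_j λ_j |ψ_j⟩⟨ψ_j|`, `σ = Σ_k μ_k |φ_k⟩⟨φ_k|`. -/
noncomputable def quasiRelEntropy {d : ℕ} (f : ℝ → ℝ) {ρ σ : Matrix (Fin d) (Fin d) ℂ}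
    (hρ : ρ.IsHermitian) (hσ : σ.IsHermitian) : ℝ :=
  ∑ j, ∑ k, hρ.eigenvalues j * f (hσ.eigenvalues k / hρ.eigenvalues j) *
    ‖(inner ℂ (hσ.eigenvectorBasis k) (hρ.eigenvectorBasis j) : ℂ)‖ ^ 2

/-- The Umegaki relative entropy `S(ρ‖σ) = Tr(ρ (log ρ − log σ))`. -/
noncomputable def relEntropy {d : ℕ} {ρ σ : Matrix (Fin d) (Fin d) ℂ}
    (hρ : ρ.IsHermitian) (hσ : σ.IsHermitian) : ℝ :=
  ((ρ * (matFun hρ Real.log - matFun hσ Real.log)).trace).re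

/-- The Tsallis relative q-entropy `S_q(ρ‖σ) = (1/(1−q))(1 − Tr(ρ^q σ^{1−q}))`. -/
noncomputable def tsallisEntropy {d : ℕ} (q : ℝ) {ρ σ : Matrix (Fin d) (Fin d) ℂ}
    (hρ : ρ.IsHermitian) (hσ : σ.IsHermitian) : ℝ :=
  (1 / (1 - q)) *
    (1 - ((matFun hρ (fun x => x ^ q) * matFun hσ (fun x => x ^ (1 - q))).trace).re)

/-!
Testing operator monotonicity on `2 × 2` matrices, with `diag(b, b')` dominating a rotated
`R diag(a₁, a₂) Rᴴ`, gives `f b ≤ w f(a₁) + (1 - w) f(a₂)` whenever `b > w a₁ + (1 - w) a₂`.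
Together with the monotonicity of `f`, this makes `f` convex on `(0, ∞)`. Since `f 1 = 0` and
the slope of `f` at infinity is `-a_f`, convexity gives, for `t = α_σ / λ_ρ ≤ μ / λ` and
`C = f t / (1 - t)`, the bound `λ f(μ/λ) ≤ (C - a_f) |λ - μ| + a_f (λ - μ)`.
Sum this over the eigenvalues `λ_j` of `ρ` and `μ_k` of `σ`, weighted by the doubly stochastic
overlaps `|⟨φ_k|ψ_j⟩|²`. The linear term then drops out because `Tr ρ = Tr σ`. Cauchy–Schwarz
bounds `Σ |λ_j - μ_k| |⟨φ_k|ψ_j⟩|²` by `√d` times the Hilbert–Schmidt norm of `ρ - σ`, and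
that norm is at most the trace norm.
-/

open Filter Topology Set

namespace Matrix

variable {n : Type*} [Fintype n]

lemma mul_diagonal_comp_eq_of_mul_diagonal_eq [DecidableEq n] {W : Matrix n n ℂ}
    {a b : n → ℝ} (h : W * diagonal (fun i => (a i : ℂ)) = diagonal (fun i => (b i : ℂ)) * W)
    (f : ℝ → ℝ) :
    W * diagonal (fun i => (f (a i) : ℂ)) = diagonal (fun i => (f (b i) : ℂ)) * W := by
  ext i j
  have hij : W i j * a j = b i * W i j := by
    simpa [mul_diagonal, diagonal_mul] using congr_fun₂ h i j
  rcases eq_or_ne (W i j) 0 with hW | hW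
  · simp [mul_diagonal, diagonal_mul, hW]
  · have hab : a j = b i := by exact_mod_cast mul_left_cancel₀ hW (hij.trans (mul_comm _ _))
    simp [mul_diagonal, diagonal_mul, hab, mul_comm]

lemma sum_sum_norm_sq_eq_re_trace (A : Matrix n n ℂ) :
    ∑ i, ∑ j, ‖A i j‖ ^ 2 = (Aᴴ * A).trace.re := by
  simp only [trace, diag_apply, mul_apply, conjTranspose_apply, Complex.star_def,
    Complex.conj_mul', Complex.re_sum, ← Complex.ofReal_pow, Complex.ofReal_re]
  exact Finset.sum_comm

lemma sum_sum_norm_sq_star_mul_mul [DecidableEq n] {U V : Matrix n n ℂ}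
    (hU : U ∈ unitaryGroup n ℂ) (hV : V ∈ unitaryGroup n ℂ) (A : Matrix n n ℂ) :
    ∑ i, ∑ j, ‖(star V * A * U) i j‖ ^ 2 = ∑ i, ∑ j, ‖A i j‖ ^ 2 := by
  have h : (star V * A * U)ᴴ * (star V * A * U) = star U * (Aᴴ * A) * U := by
    simp only [← star_eq_conjTranspose, star_mul, star_star, mul_assoc]
    rw [← mul_assoc V, Unitary.mul_star_self_of_mem hV, one_mul]
  rw [sum_sum_norm_sq_eq_re_trace, sum_sum_norm_sq_eq_re_trace, h, trace_mul_cycle,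
    Unitary.mul_star_self_of_mem hU, one_mul]

lemma posSemidef_fin_two_of_sq_le {p q r : ℝ} (hp : 0 < p) (hq : q ^ 2 ≤ p * r) :
    (!![(p : ℂ), q; q, r]).PosSemidef := by
  have hr : 0 ≤ r - q ^ 2 / p := by rw [sub_nonneg, div_le_iff₀ hp]; linarith
  set v : Fin 2 → ℂ := ![(√p : ℂ), (q / √p : ℝ)]
  have h : !![(p : ℂ), q; q, r] =
      vecMulVec v (star v) + diagonal ![0, ((r - q ^ 2 / p : ℝ) : ℂ)] := by
    have hsp : (√p : ℂ) * √p = p := by exact_mod_cast Real.mul_self_sqrt hp.le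
    have hsp' : (√p : ℂ) ≠ 0 := by exact_mod_cast (Real.sqrt_pos.2 hp).ne'
    ext i j
    fin_cases i <;> fin_cases j <;> simp [v, vecMulVec, hsp]
    · rw [mul_div_cancel₀ _ hsp']
    · rw [div_mul_cancel₀ _ hsp']
    · rw [div_mul_div_comm, hsp]; ring
  rw [h]
  refine (posSemidef_vecMulVec_self_star v).add (PosSemidef.diagonal fun i => ?_)
  fin_cases i
  · simp
  · exact Complex.zero_le_real.2 hr

lemma rotation_mem_unitaryGroup {c s : ℝ} (h : c ^ 2 + s ^ 2 = 1) :
    !![(c : ℂ), -s; s, c] ∈ unitaryGroup (Fin 2) ℂ := by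
  have h' : (c : ℂ) ^ 2 + (s : ℂ) ^ 2 = 1 := by exact_mod_cast h
  rw [mem_unitaryGroup_iff]
  ext i j
  fin_cases i <;> fin_cases j <;> simp [mul_apply, Fin.sum_univ_two, star_apply] <;>
    first | linear_combination h' | ring

lemma rotation_mul_diagonal_mul_star (c s x y : ℝ) :
    !![(c : ℂ), -s; s, c] * diagonal (fun i => ((![x, y] i : ℝ) : ℂ)) *
        star !![(c : ℂ), -s; s, c] =
      !![((c ^ 2 * x + s ^ 2 * y : ℝ) : ℂ), ((c * s * (x - y) : ℝ) : ℂ);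
        ((c * s * (x - y) : ℝ) : ℂ), ((s ^ 2 * x + c ^ 2 * y : ℝ) : ℂ)] := by
  ext i j
  fin_cases i <;> fin_cases j <;>
    simp [mul_apply, Fin.sum_univ_two, star_apply, vecMul_diagonal] <;> ring

/-- The second diagonal entry makes the difference the matrix `!![η, q; q, (a₁ - a₂)² / η]` with
`q = -c s (a₁ - a₂)`, whose determinant `(a₁ - a₂)² (1 - c² s²)` is nonnegative. -/
lemma posSemidef_diagonal_sub_rotation {c s a₁ a₂ η : ℝ} (hcs : c ^ 2 + s ^ 2 = 1)
    (hη : 0 < η) :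
    (diagonal (fun i =>
        ((![c ^ 2 * a₁ + s ^ 2 * a₂ + η, s ^ 2 * a₁ + c ^ 2 * a₂ + (a₁ - a₂) ^ 2 / η] i : ℝ) : ℂ)) -
      !![(c : ℂ), -s; s, c] * diagonal (fun i => ((![a₁, a₂] i : ℝ) : ℂ)) *
        star !![(c : ℂ), -s; s, c]).PosSemidef := by
  rw [rotation_mul_diagonal_mul_star]
  have h : diagonal (fun i =>
        ((![c ^ 2 * a₁ + s ^ 2 * a₂ + η, s ^ 2 * a₁ + c ^ 2 * a₂ + (a₁ - a₂) ^ 2 / η] i : ℝ) : ℂ)) -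
      !![((c ^ 2 * a₁ + s ^ 2 * a₂ : ℝ) : ℂ), ((c * s * (a₁ - a₂) : ℝ) : ℂ);
        ((c * s * (a₁ - a₂) : ℝ) : ℂ), ((s ^ 2 * a₁ + c ^ 2 * a₂ : ℝ) : ℂ)] =
      !![(η : ℂ), ((-(c * s * (a₁ - a₂))) : ℝ); ((-(c * s * (a₁ - a₂))) : ℝ),
        ((a₁ - a₂) ^ 2 / η : ℝ)] := by
    ext i j
    fin_cases i <;> fin_cases j <;> simp
  rw [h]
  refine posSemidef_fin_two_of_sq_le hη ?_
  have hcs' : (c * s) ^ 2 ≤ 1 := by nlinarith [sq_nonneg c, sq_nonneg s]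
  rw [mul_div_cancel₀ _ hη.ne', neg_sq, mul_pow]
  nlinarith [sq_nonneg (a₁ - a₂)]

namespace IsHermitian

variable [DecidableEq n] {A : Matrix n n ℂ} (hA : A.IsHermitian)

lemma mul_eigenvectorUnitary :
    A * hA.eigenvectorUnitary =
      hA.eigenvectorUnitary * diagonal (fun i => (hA.eigenvalues i : ℂ)) := by
  conv_lhs => arg 1; rw [hA.spectral_theorem]
  simp [mul_assoc, Function.comp_def]

lemma star_eigenvectorUnitary_mul_mul_eigenvectorUnitary :
    star (hA.eigenvectorUnitary : Matrix n n ℂ) * A * hA.eigenvectorUnitary =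
      diagonal (fun i => (hA.eigenvalues i : ℂ)) := by
  rw [mul_assoc, hA.mul_eigenvectorUnitary, ← mul_assoc, Unitary.coe_star_mul_self, one_mul]

lemma star_eigenvectorUnitary_mul :
    star (hA.eigenvectorUnitary : Matrix n n ℂ) * A =
      diagonal (fun i => (hA.eigenvalues i : ℂ)) * star (hA.eigenvectorUnitary : Matrix n n ℂ) := by
  rw [← hA.star_eigenvectorUnitary_mul_mul_eigenvectorUnitary, mul_assoc _ _ (star _),
    Unitary.mul_star_self_of_mem hA.eigenvectorUnitary.2, mul_one]

lemma inner_eigenvectorBasis {B : Matrix n n ℂ} (hB : B.IsHermitian) (j k : n) :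
    inner ℂ (hB.eigenvectorBasis k) (hA.eigenvectorBasis j) =
      (star (hB.eigenvectorUnitary : Matrix n n ℂ) * hA.eigenvectorUnitary) k j := by
  simp [mul_apply, PiLp.inner_apply, star_apply, mul_comm]

end IsHermitian

end Matrix

lemma matFun_eq_of_eq_conj {d : ℕ} {A : Matrix (Fin d) (Fin d) ℂ} (hA : A.IsHermitian)
    {U : Matrix (Fin d) (Fin d) ℂ} (hU : U ∈ unitaryGroup (Fin d) ℂ) {a : Fin d → ℝ}
    (h : A = U * diagonal (fun i => (a i : ℂ)) * star U) (f : ℝ → ℝ) :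
    matFun hA f = U * diagonal (fun i => (f (a i) : ℂ)) * star U := by
  set V : Matrix (Fin d) (Fin d) ℂ := (hA.eigenvectorUnitary : Matrix (Fin d) (Fin d) ℂ)
  have hV : V ∈ unitaryGroup (Fin d) ℂ := hA.eigenvectorUnitary.2
  have hAV : A * V = V * diagonal (fun i => (hA.eigenvalues i : ℂ)) := hA.mul_eigenvectorUnitary
  have hW : star U * V * diagonal (fun i => (hA.eigenvalues i : ℂ)) =
      diagonal (fun i => (a i : ℂ)) * (star U * V) := by
    rw [mul_assoc, ← hAV, h]
    simp only [mul_assoc, ← mul_assoc (star U) U, Unitary.star_mul_self_of_mem hU, one_mul]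
  calc matFun hA f
      = U * (star U * V * diagonal (fun i => (f (hA.eigenvalues i) : ℂ))) * star V := by
        simp only [← mul_assoc, Unitary.mul_star_self_of_mem hU, one_mul]; rfl
    _ = U * diagonal (fun i => (f (a i) : ℂ)) * star U := by
        rw [mul_diagonal_comp_eq_of_mul_diagonal_eq hW f]
        simp only [mul_assoc, Unitary.mul_star_self_of_mem hV, mul_one]

lemma traceNorm_eq_sum_abs_eigenvalues {d : ℕ} {X : Matrix (Fin d) (Fin d) ℂ}
    (hX : X.IsHermitian) : traceNorm X = ∑ i, |hX.eigenvalues i| := by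
  set W : Matrix (Fin d) (Fin d) ℂ := (hX.eigenvectorUnitary : Matrix (Fin d) (Fin d) ℂ)
  have hW : W ∈ unitaryGroup (Fin d) ℂ := hX.eigenvectorUnitary.2
  have hXW : X * W = W * diagonal (fun i => (hX.eigenvalues i : ℂ)) := hX.mul_eigenvectorUnitary
  have hXX : Xᴴ * X =
      W * diagonal (fun i => ((hX.eigenvalues i * hX.eigenvalues i : ℝ) : ℂ)) * star W := by
    rw [hX.eq, ← mul_one (X * X), ← Unitary.mul_star_self_of_mem hW, ← mul_assoc, mul_assoc X,
      hXW, ← mul_assoc, hXW, mul_assoc W, diagonal_mul_diagonal]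
    simp
  change (matFun _ Real.sqrt).trace.re = _
  rw [matFun_eq_of_eq_conj _ hW hXX, trace_mul_cycle, Unitary.star_mul_self_of_mem hW, one_mul,
    trace_diagonal, Complex.re_sum]
  simp [Real.sqrt_mul_self_eq_abs]

section Overlap

variable {d : ℕ} {ρ σ : Matrix (Fin d) (Fin d) ℂ} (hρ : ρ.IsHermitian) (hσ : σ.IsHermitian)

lemma star_eigenvectorUnitary_mul_sub_mul_apply (j k : Fin d) :
    (star (hσ.eigenvectorUnitary : Matrix (Fin d) (Fin d) ℂ) * (ρ - σ) *
        hρ.eigenvectorUnitary) k j =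
      ((hρ.eigenvalues j - hσ.eigenvalues k : ℝ) : ℂ) *
        inner ℂ (hσ.eigenvectorBasis k) (hρ.eigenvectorBasis j) := by
  set U : Matrix (Fin d) (Fin d) ℂ := (hρ.eigenvectorUnitary : Matrix (Fin d) (Fin d) ℂ)
  set V : Matrix (Fin d) (Fin d) ℂ := (hσ.eigenvectorUnitary : Matrix (Fin d) (Fin d) ℂ)
  have hρU : ρ * U = U * diagonal (fun i => (hρ.eigenvalues i : ℂ)) := hρ.mul_eigenvectorUnitary
  have hVσ : star V * σ = diagonal (fun i => (hσ.eigenvalues i : ℂ)) * star V :=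
    hσ.star_eigenvectorUnitary_mul
  have hρ' : star V * ρ * U = star V * U * diagonal (fun i => (hρ.eigenvalues i : ℂ)) := by
    rw [mul_assoc, hρU, ← mul_assoc]
  have hσ' : star V * σ * U = diagonal (fun i => (hσ.eigenvalues i : ℂ)) * (star V * U) := by
    rw [hVσ, mul_assoc]
  rw [hρ.inner_eigenvectorBasis hσ, mul_sub, sub_mul, hρ', hσ', Matrix.sub_apply, mul_diagonal,
    diagonal_mul]
  push_cast
  ring

lemma sum_sum_sub_mul_norm_sq_inner :
    ∑ j, ∑ k, (hρ.eigenvalues j - hσ.eigenvalues k) *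
        ‖inner ℂ (hσ.eigenvectorBasis k) (hρ.eigenvectorBasis j)‖ ^ 2 =
      ρ.trace.re - σ.trace.re := by
  have hrow (j) : ∑ k, ‖inner ℂ (hσ.eigenvectorBasis k) (hρ.eigenvectorBasis j)‖ ^ 2 = 1 := by
    simp [hσ.eigenvectorBasis.sum_sq_norm_inner_right]
  have hcol (k) : ∑ j, ‖inner ℂ (hσ.eigenvectorBasis k) (hρ.eigenvectorBasis j)‖ ^ 2 = 1 := by
    simp [hρ.eigenvectorBasis.sum_sq_norm_inner_left]
  simp only [sub_mul, Finset.sum_sub_distrib, ← Finset.mul_sum, hrow, mul_one]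
  rw [Finset.sum_comm]
  simp [← Finset.mul_sum, hcol, hρ.trace_eq_sum_eigenvalues, hσ.trace_eq_sum_eigenvalues]

lemma sum_sum_sq_sub_mul_norm_sq_inner :
    ∑ j, ∑ k, (hρ.eigenvalues j - hσ.eigenvalues k) ^ 2 *
        ‖inner ℂ (hσ.eigenvectorBasis k) (hρ.eigenvectorBasis j)‖ ^ 2 =
      ∑ i, (hρ.sub hσ).eigenvalues i ^ 2 := by
  have h := sum_sum_norm_sq_star_mul_mul (hρ.sub hσ).eigenvectorUnitary.2
    (hρ.sub hσ).eigenvectorUnitary.2 (ρ - σ)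
  rw [(hρ.sub hσ).star_eigenvectorUnitary_mul_mul_eigenvectorUnitary,
    ← sum_sum_norm_sq_star_mul_mul hρ.eigenvectorUnitary.2 hσ.eigenvectorUnitary.2 (ρ - σ)] at h
  simp only [star_eigenvectorUnitary_mul_sub_mul_apply, norm_mul, mul_pow, Complex.norm_real,
    Real.norm_eq_abs, sq_abs] at h
  rw [Finset.sum_comm, ← h]
  simp [diagonal_apply, apply_ite]

lemma sum_sum_abs_sub_mul_norm_sq_inner_le :
    ∑ j, ∑ k, |hρ.eigenvalues j - hσ.eigenvalues k| *
        ‖inner ℂ (hσ.eigenvectorBasis k) (hρ.eigenvectorBasis j)‖ ^ 2 ≤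
      √d * traceNorm (ρ - σ) := by
  set w : Fin d × Fin d → ℝ := fun p =>
    ‖inner ℂ (hσ.eigenvectorBasis p.2) (hρ.eigenvectorBasis p.1)‖
  set δ : Fin d × Fin d → ℝ := fun p => |hρ.eigenvalues p.1 - hσ.eigenvalues p.2|
  have hw : ∑ p, w p ^ 2 = d := by
    simp [w, Fintype.sum_prod_type, hσ.eigenvectorBasis.sum_sq_norm_inner_right]
  have hwδ : ∑ p, (w p * δ p) ^ 2 = ∑ i, (hρ.sub hσ).eigenvalues i ^ 2 := by
    rw [← sum_sum_sq_sub_mul_norm_sq_inner hρ hσ, Fintype.sum_prod_type]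
    simp only [w, δ, mul_pow, sq_abs, mul_comm]
  have hν : √(∑ i, (hρ.sub hσ).eigenvalues i ^ 2) ≤ traceNorm (ρ - σ) := by
    rw [traceNorm_eq_sum_abs_eigenvalues (hρ.sub hσ),
      Real.sqrt_le_left (Finset.sum_nonneg fun i _ => abs_nonneg _)]
    simpa only [sq_abs] using Finset.sum_sq_le_sq_sum_of_nonneg (s := Finset.univ)
      fun i _ => abs_nonneg ((hρ.sub hσ).eigenvalues i)
  calc ∑ j, ∑ k, |hρ.eigenvalues j - hσ.eigenvalues k| *
        ‖inner ℂ (hσ.eigenvectorBasis k) (hρ.eigenvectorBasis j)‖ ^ 2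
      = ∑ p, w p * (w p * δ p) := by
        rw [Fintype.sum_prod_type]
        exact Finset.sum_congr rfl fun j _ => Finset.sum_congr rfl fun k _ => by ring
    _ ≤ √(∑ p, w p ^ 2) * √(∑ p, (w p * δ p) ^ 2) := Real.sum_mul_le_sqrt_mul_sqrt _ _ _
    _ ≤ √d * traceNorm (ρ - σ) := by rw [hw, hwδ]; gcongr

lemma quasiRelEntropy_le_of_forall_le (f : ℝ → ℝ) {C a : ℝ} (hC : 0 ≤ C)
    (h : ∀ j k, hρ.eigenvalues j * f (hσ.eigenvalues k / hρ.eigenvalues j) ≤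
      C * |hρ.eigenvalues j - hσ.eigenvalues k| + a * (hρ.eigenvalues j - hσ.eigenvalues k)) :
    quasiRelEntropy f hρ hσ ≤
      C * (√d * traceNorm (ρ - σ)) + a * (ρ.trace.re - σ.trace.re) := by
  calc quasiRelEntropy f hρ hσ
      ≤ ∑ j, ∑ k, (C * |hρ.eigenvalues j - hσ.eigenvalues k| +
          a * (hρ.eigenvalues j - hσ.eigenvalues k)) *
          ‖inner ℂ (hσ.eigenvectorBasis k) (hρ.eigenvectorBasis j)‖ ^ 2 :=
        Finset.sum_le_sum fun j _ => Finset.sum_le_sum fun k _ =>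
          mul_le_mul_of_nonneg_right (h j k) (sq_nonneg _)
    _ = C * ∑ j, ∑ k, |hρ.eigenvalues j - hσ.eigenvalues k| *
          ‖inner ℂ (hσ.eigenvectorBasis k) (hρ.eigenvectorBasis j)‖ ^ 2 +
        a * ∑ j, ∑ k, (hρ.eigenvalues j - hσ.eigenvalues k) *
          ‖inner ℂ (hσ.eigenvectorBasis k) (hρ.eigenvectorBasis j)‖ ^ 2 := by
        simp only [add_mul, mul_assoc, Finset.sum_add_distrib, Finset.mul_sum]
    _ ≤ C * (√d * traceNorm (ρ - σ)) + a * (ρ.trace.re - σ.trace.re) := by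
        rw [sum_sum_sub_mul_norm_sq_inner]
        gcongr
        exact sum_sum_abs_sub_mul_norm_sq_inner_le hρ hσ

end Overlap

namespace OpMonoDecrOn

variable {f : ℝ → ℝ}

theorem apply_le_of_lt (hf : OpMonoDecrOn f) {a₁ a₂ w b : ℝ} (ha₁ : 0 < a₁) (ha₂ : 0 < a₂)
    (hw₀ : 0 ≤ w) (hw₁ : w ≤ 1) (hb : w * a₁ + (1 - w) * a₂ < b) :
    f b ≤ w * f a₁ + (1 - w) * f a₂ := by
  obtain ⟨c, rfl⟩ : ∃ c : ℝ, c ^ 2 = w := ⟨√w, Real.sq_sqrt hw₀⟩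
  obtain ⟨s, hs⟩ : ∃ s : ℝ, s ^ 2 = 1 - c ^ 2 := ⟨√(1 - c ^ 2), Real.sq_sqrt (by linarith)⟩
  have hcs : c ^ 2 + s ^ 2 = 1 := by linarith
  rw [← hs] at hb ⊢
  obtain ⟨η, hη, rfl⟩ : ∃ η, 0 < η ∧ b = c ^ 2 * a₁ + s ^ 2 * a₂ + η :=
    ⟨b - (c ^ 2 * a₁ + s ^ 2 * a₂), sub_pos.2 hb, by ring⟩
  set R := !![(c : ℂ), -s; s, c]
  have hR : R ∈ unitaryGroup (Fin 2) ℂ := rotation_mem_unitaryGroup hcs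
  set A := R * diagonal (fun i => ((![a₁, a₂] i : ℝ) : ℂ)) * star R
  set B := diagonal (fun i =>
    ((![c ^ 2 * a₁ + s ^ 2 * a₂ + η, s ^ 2 * a₁ + c ^ 2 * a₂ + (a₁ - a₂) ^ 2 / η] i : ℝ) : ℂ))
  have hA : A.PosDef := by
    refine (IsUnit.posDef_star_right_conjugate_iff (Unitary.isUnit_coe (U := ⟨R, hR⟩))).2 ?_
    rw [posDef_diagonal_iff]
    intro i
    fin_cases i <;> simp [ha₁, ha₂]
  have hBA : (B - A).PosSemidef := posSemidef_diagonal_sub_rotation hcs hη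
  have hB : B.PosDef := by simpa using hA.add_posSemidef hBA
  have hfA : (fun i => (f (![a₁, a₂] i) : ℂ)) = fun i => ((![f a₁, f a₂] i : ℝ) : ℂ) := by
    ext i; fin_cases i <;> rfl
  have h := (hf 2 A B hA hB hBA).diag_nonneg (i := 0)
  rw [matFun_eq_of_eq_conj hA.1 hR rfl, hfA, rotation_mul_diagonal_mul_star,
    matFun_eq_of_eq_conj hB.1 (one_mem _) (by simp [B])
      (a := ![c ^ 2 * a₁ + s ^ 2 * a₂ + η, s ^ 2 * a₁ + c ^ 2 * a₂ + (a₁ - a₂) ^ 2 / η])] at h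
  simp at h
  exact_mod_cast h

theorem antitoneOn (hf : OpMonoDecrOn f) : AntitoneOn f (Ioi 0) := by
  intro x hx y _ hxy
  rcases hxy.eq_or_lt with rfl | hlt
  · rfl
  · simpa using hf.apply_le_of_lt hx hx zero_le_one le_rfl (by simpa using hlt)

theorem tendsto_apply_sub (hf : OpMonoDecrOn f) {x : ℝ} (hx : 0 < x) :
    Tendsto (fun δ => f (x - δ)) (𝓝[>] 0) (𝓝 (f x)) := by
  -- `apply_le_of_lt` at the points `x` and `x / 2` bounds `f (x - δ)` by `g δ` for small `δ`
  -- `apply_le_of_lt` at the points `x` and `x / 2` bounds `f (x - δ)` by `g δ` for small `δ`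
  set g : ℝ → ℝ := fun δ => (1 - 4 * δ / x) * f x + (1 - (1 - 4 * δ / x)) * f (x / 2)
  have hg : Tendsto g (𝓝[>] 0) (𝓝 (f x)) := by
    have hcont : Continuous g := by fun_prop
    simpa [g] using (hcont.tendsto 0).mono_left nhdsWithin_le_nhds
  refine tendsto_of_tendsto_of_tendsto_of_le_of_le' tendsto_const_nhds hg ?_ ?_
  · filter_upwards [Ioo_mem_nhdsGT hx] with δ hδ
    exact hf.antitoneOn (sub_pos.2 hδ.2) hx (by linarith [hδ.1])
  · filter_upwards [Ioo_mem_nhdsGT (by positivity : (0 : ℝ) < x / 4)] with δ hδ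
    have hw₀ : 4 * δ / x ≤ 1 := by rw [div_le_one hx]; linarith [hδ.2]
    have hw₁ : 0 < 4 * δ / x := div_pos (by linarith [hδ.1]) hx
    refine hf.apply_le_of_lt hx (half_pos hx) (by linarith) (by linarith) ?_
    have : (1 - 4 * δ / x) * x + (1 - (1 - 4 * δ / x)) * (x / 2) = x - 2 * δ := by
      field_simp; ring
    linarith [hδ.1]

theorem convexOn (hf : OpMonoDecrOn f) : ConvexOn ℝ (Ioi 0) f := by
  refine ⟨convex_Ioi 0, fun x hx y hy a b ha hb hab => ?_⟩
  obtain rfl : b = 1 - a := by linarith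
  have hlim := ((hf.tendsto_apply_sub hx).const_mul a).add
    ((hf.tendsto_apply_sub hy).const_mul (1 - a))
  refine ge_of_tendsto hlim ?_
  filter_upwards [Ioo_mem_nhdsGT (lt_min (mem_Ioi.1 hx) (mem_Ioi.1 hy))] with δ hδ
  have hδx : δ < x := hδ.2.trans_le (min_le_left _ _)
  have hδy : δ < y := hδ.2.trans_le (min_le_right _ _)
  refine hf.apply_le_of_lt (sub_pos.2 hδx) (sub_pos.2 hδy) ha (by linarith) ?_
  simp only [smul_eq_mul]
  linarith [hδ.1]

end OpMonoDecrOn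

namespace ConvexOn

variable {f : ℝ → ℝ}

theorem slope_le_of_tendsto_div_atTop {y z L : ℝ} (hf : ConvexOn ℝ (Ici y) f)
    (hL : Tendsto (fun x => f x / x) atTop (𝓝 L)) (hyz : y < z) :
    (f z - f y) / (z - y) ≤ L := by
  have hdiv (c : ℝ) : Tendsto (fun R => c / R) atTop (𝓝 0) :=
    tendsto_const_nhds.div_atTop tendsto_id
  have hlim : Tendsto (fun R => (f R / R - f y / R) / (1 - y / R)) atTop (𝓝 L) := by
    have h := (hL.sub (hdiv (f y))).div (tendsto_const_nhds.sub (hdiv y))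
      (by norm_num : (1 : ℝ) - 0 ≠ 0)
    rwa [sub_zero, sub_zero, div_one] at h
  refine ge_of_tendsto hlim ?_
  filter_upwards [eventually_gt_atTop z, eventually_gt_atTop 0] with R hzR hR
  have hyR : R - y ≠ 0 := by linarith
  rw [show (f R / R - f y / R) / (1 - y / R) = (f R - f y) / (R - y) by field_simp]
  exact hf.secant_mono_aux2 self_mem_Ici (mem_Ici.2 (by linarith)) hyz hzR

variable {af : ℝ}

theorem slope_le_neg_of_tendsto (hf : ConvexOn ℝ (Ioi 0) f)
    (haf : Tendsto (fun x => -f x / x) atTop (𝓝 af)) {y z : ℝ} (hy : 0 < y) (hyz : y < z) :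
    (f z - f y) / (z - y) ≤ -af := by
  refine (hf.subset (Ici_subset_Ioi.2 hy) (convex_Ici y)).slope_le_of_tendsto_div_atTop ?_ hyz
  simpa [neg_div] using haf.neg

theorem le_div_one_sub_of_tendsto (hf : ConvexOn ℝ (Ioi 0) f)
    (haf : Tendsto (fun x => -f x / x) atTop (𝓝 af)) (hf1 : f 1 = 0) {t : ℝ} (ht₀ : 0 < t)
    (ht₁ : t < 1) :
    af ≤ f t / (1 - t) := by
  have := hf.slope_le_neg_of_tendsto haf ht₀ ht₁
  rwa [hf1, zero_sub, neg_div, neg_le_neg_iff] at this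

theorem mul_apply_div_le (hf : ConvexOn ℝ (Ioi 0) f)
    (haf : Tendsto (fun x => -f x / x) atTop (𝓝 af)) (hf1 : f 1 = 0) {t x y : ℝ} (ht₀ : 0 < t)
    (ht₁ : t < 1) (hx : 0 < x) (hty : t * x ≤ y) :
    x * f (y / x) ≤ (f t / (1 - t) - af) * |x - y| + af * (x - y) := by
  have h1t : 0 < 1 - t := sub_pos.2 ht₁
  rcases le_or_gt y x with hyx | hxy
  · have hchord : f (y / x) ≤ f t / (1 - t) * (1 - y / x) := by
      have hu : t ≤ y / x := by rw [le_div_iff₀ hx]; linarith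
      have hu' : y / x ≤ 1 := (div_le_one hx).2 hyx
      have key := hf.2 (mem_Ioi.2 ht₀) (mem_Ioi.2 one_pos)
        (div_nonneg (by linarith) h1t.le : 0 ≤ (1 - y / x) / (1 - t))
        (div_nonneg (by linarith) h1t.le : 0 ≤ (y / x - t) / (1 - t))
        (by rw [← add_div, div_eq_one_iff_eq h1t.ne']; ring)
      have hpt : ((1 - y / x) / (1 - t)) • t + ((y / x - t) / (1 - t)) • (1 : ℝ) = y / x := by
        simp only [smul_eq_mul]; field_simp; ring
      rw [hpt, hf1, smul_zero, add_zero, smul_eq_mul] at key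
      linarith [key, show (1 - y / x) / (1 - t) * f t = f t / (1 - t) * (1 - y / x) by ring]
    rw [abs_of_nonneg (sub_nonneg.2 hyx)]
    calc x * f (y / x) ≤ x * (f t / (1 - t) * (1 - y / x)) :=
          mul_le_mul_of_nonneg_left hchord hx.le
      _ = (f t / (1 - t) - af) * (x - y) + af * (x - y) := by field_simp; ring
  · have hC := hf.le_div_one_sub_of_tendsto haf hf1 ht₀ ht₁
    have hline : f (y / x) ≤ -af * (y / x - 1) := by
      have h1 : 1 < y / x := (one_lt_div hx).2 hxy
      have := hf.slope_le_neg_of_tendsto haf one_pos h1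
      rwa [hf1, sub_zero, div_le_iff₀ (sub_pos.2 h1)] at this
    rw [abs_of_neg (sub_neg.2 hxy)]
    calc x * f (y / x) ≤ x * (-af * (y / x - 1)) := mul_le_mul_of_nonneg_left hline hx.le
      _ = af * (x - y) := by field_simp; ring
      _ ≤ (f t / (1 - t) - af) * -(x - y) + af * (x - y) := by nlinarith

end ConvexOn

/-- dimension-dependent upper continuity bound on the quasi-relative entropy. -/
theorem quasiRelEntropy_le_sqrt_dim (f : ℝ → ℝ) (af : ℝ)
    (hf : OpMonoDecrOn f) (hf1 : f 1 = 0)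
    (haf : Filter.Tendsto (fun x : ℝ => -f x / x) Filter.atTop (nhds af))
    (d : ℕ) (ρ σ : Matrix (Fin d) (Fin d) ℂ) (hρ : ρ.PosDef) (hσ : σ.PosDef)
    (hρtr : ρ.trace = 1) (hσtr : σ.trace = 1)
    (lρ aσ : ℝ)
    (hl : IsGreatest (Set.range hρ.1.eigenvalues) lρ)
    (ha : IsLeast (Set.range hσ.1.eigenvalues) aσ)
    (hlt : aσ < lρ) :
    quasiRelEntropy f hρ.1 hσ.1 ≤
      traceNorm (ρ - σ) * Real.sqrt d * (lρ / (lρ - aσ) * f (aσ / lρ) - af) := by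
  obtain ⟨k₀, hk₀⟩ := ha.1
  have haσ : 0 < aσ := hk₀ ▸ hσ.eigenvalues_pos k₀
  have hlρ : 0 < lρ := haσ.trans hlt
  have ht₀ : 0 < aσ / lρ := div_pos haσ hlρ
  have ht₁ : aσ / lρ < 1 := (div_lt_one hlρ).2 hlt
  have hconv := hf.convexOn
  have hpoint (j k) : hρ.1.eigenvalues j * f (hσ.1.eigenvalues k / hρ.1.eigenvalues j) ≤
      (f (aσ / lρ) / (1 - aσ / lρ) - af) * |hρ.1.eigenvalues j - hσ.1.eigenvalues k| +
        af * (hρ.1.eigenvalues j - hσ.1.eigenvalues k) :=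
    hconv.mul_apply_div_le haf hf1 ht₀ ht₁ (hρ.eigenvalues_pos j) <|
      calc aσ / lρ * hρ.1.eigenvalues j ≤ aσ / lρ * lρ :=
            mul_le_mul_of_nonneg_left (hl.2 ⟨j, rfl⟩) ht₀.le
        _ = aσ := div_mul_cancel₀ _ hlρ.ne'
        _ ≤ hσ.1.eigenvalues k := ha.2 ⟨k, rfl⟩
  have hcoef : lρ / (lρ - aσ) * f (aσ / lρ) = f (aσ / lρ) / (1 - aσ / lρ) := by
    have : lρ - aσ ≠ 0 := (sub_pos.2 hlt).ne'
    field_simp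
  calc quasiRelEntropy f hρ.1 hσ.1
      ≤ (f (aσ / lρ) / (1 - aσ / lρ) - af) * (√d * traceNorm (ρ - σ)) +
          af * (ρ.trace.re - σ.trace.re) :=
        quasiRelEntropy_le_of_forall_le hρ.1 hσ.1 f
          (sub_nonneg.2 (hconv.le_div_one_sub_of_tendsto haf hf1 ht₀ ht₁)) hpoint
    _ = traceNorm (ρ - σ) * √d * (lρ / (lρ - aσ) * f (aσ / lρ) - af) := by
        rw [hρtr, hσtr, hcoef]; ring
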